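/- arXiv:2107.06159 — 2 statements merged into one kernel-verified Lean document; each statement's English description precedes it below -/
import Mathlib

section
/- Let Λ be a group, I a set, Λ^(I) the direct sum (functions I → Λ with finite support). For i ∈ I let π_i : Λ → Λ^(I) be the embedding as the i-th summand. If Σ ⊆ Λ^(I) is a normal subgroup of Λ^(I) such that Σ ∩ π_i(Λ) = {e} for every i ∈ I, then every element a ∈ Σ has all its coordinates a_i in the center of Λ. -/
/-- The direct sum Λ^(I): finitely supported functions I → Λ, as a subgroup of the product. -/
def finSuppSubgroup (I Λ : Type*) [Group Λ] : Subgroup (I → Λ) where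
  carrier := {f | {i | f i ≠ 1}.Finite}
  one_mem' := by simp
  mul_mem' := by
    intro f g hf hg
    refine (hf.union hg).subset fun i hi => ?_
    by_contra hc
    simp only [Set.mem_union, Set.mem_setOf_eq, not_or, not_not] at hc
    exact hi (by simp [Pi.mul_apply, hc.1, hc.2])
  inv_mem' := by
    intro f hf
    refine hf.subset fun i hi => ?_
    simpa using hi

/-- If Σ ◁ Λ^(I) is a normal subgroup intersecting each coordinate embedding trivially,
then every coordinate of every element of Σ is central in Λ. -/
theorem stmt4 {I Λ : Type*} [Group Λ] [DecidableEq I]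
    (S : Subgroup (I → Λ)) (hle : S ≤ finSuppSubgroup I Λ)
    (hnormal : ∀ a ∈ S, ∀ b ∈ finSuppSubgroup I Λ, b * a * b⁻¹ ∈ S)
    (htriv : ∀ (i : I) (l : Λ), Pi.mulSingle i l ∈ S → l = 1) :
    ∀ a ∈ S, ∀ i : I, a i ∈ Subgroup.center Λ := by
  intro a ha i
  rw [Subgroup.mem_center_iff]
  intro b
  have hb : Pi.mulSingle i b ∈ finSuppSubgroup I Λ :=
    (Set.finite_singleton i).subset fun j hj => by
      by_contra hc
      simp only [Set.mem_singleton_iff] at hc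
      exact hj (by simp [Pi.mulSingle_apply, hc])
  have hc : Pi.mulSingle i b * a * (Pi.mulSingle i b)⁻¹ * a⁻¹ ∈ S :=
    S.mul_mem (hnormal a ha _ hb) (S.inv_mem ha)
  have heq : Pi.mulSingle i b * a * (Pi.mulSingle i b)⁻¹ * a⁻¹
      = Pi.mulSingle i (b * a i * b⁻¹ * (a i)⁻¹) := by
    funext j
    by_cases h : j = i
    · subst h; simp [Pi.mul_apply, Pi.inv_apply]
    · simp [Pi.mul_apply, Pi.inv_apply, Pi.mulSingle_apply, h]
  rw [heq] at hc
  have := htriv i _ hc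
  have h1 := mul_eq_one_iff_eq_inv.mp this
  rw [inv_inv] at h1
  exact mul_inv_eq_iff_eq_mul.mp h1
end

section
/- Let Σ be a normal subgroup of Λ^(I) that is invariant under the coordinate-permuting action of a group Γ acting transitively on I, with Σ ∩ π_i(Λ) = {e} for all i ∈ I. If Λ₃ := p_{i₀}(Σ) (for some fixed i₀ ∈ I), then Λ₃ is a normal subgroup of Λ and Σ ⊆ Λ₃^(I). -/
/-- If Σ ◁ Λ^(I) is normal, invariant under a transitive coordinate-permuting Γ-action,
and intersects each coordinate embedding trivially, then Λ₃ := p_{i₀}(Σ) is normal in Λ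
and Σ ⊆ Λ₃^(I). -/
theorem stmt7 {Γ I Λ : Type*} [Group Γ] [Group Λ] [MulAction Γ I]
    [MulAction.IsPretransitive Γ I] [DecidableEq I]
    (S : Subgroup (I → Λ)) (hle : S ≤ finSuppSubgroup I Λ)
    (hnormal : ∀ a ∈ S, ∀ b ∈ finSuppSubgroup I Λ, b * a * b⁻¹ ∈ S)
    (hΓinv : ∀ g : Γ, ∀ a ∈ S, (fun j : I => a (g⁻¹ • j)) ∈ S)
    (htriv : ∀ (i : I) (l : Λ), Pi.mulSingle i l ∈ S → l = 1)
    (i₀ : I) :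
    (S.map (Pi.evalMonoidHom (fun _ : I => Λ) i₀)).Normal ∧
      ∀ a ∈ S, ∀ i : I, a i ∈ S.map (Pi.evalMonoidHom (fun _ : I => Λ) i₀) := by

  have hsingle : ∀ (i : I) (l : Λ), Pi.mulSingle i l ∈ finSuppSubgroup I Λ := by
    intro i l
    refine Set.Finite.subset (Set.finite_singleton i) fun j hj => ?_
    by_contra hc
    rw [Set.mem_singleton_iff] at hc
    simp [Pi.mulSingle_apply, hc] at hj
  have hcentral : ∀ a ∈ S, ∀ i : I, ∀ l : Λ, l * a i = a i * l := by
    intro a ha i l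
    have hc : (Pi.mulSingle i l * a * (Pi.mulSingle i l)⁻¹) * a⁻¹ ∈ S :=
      S.mul_mem (hnormal a ha _ (hsingle i l)) (S.inv_mem ha)
    have heq : (Pi.mulSingle i l * a * (Pi.mulSingle i l)⁻¹) * a⁻¹
        = Pi.mulSingle i (l * a i * l⁻¹ * (a i)⁻¹) := by
      funext j
      by_cases h : j = i
      · subst h; simp [Pi.mul_apply, Pi.inv_apply, mul_assoc]
      · simp [Pi.mul_apply, Pi.inv_apply, Pi.mulSingle_apply, h]
    have := htriv i _ (heq ▸ hc)
    have h2 : l * a i * l⁻¹ = a i := by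
      have := mul_eq_one_iff_eq_inv.mp this
      simpa using this
    calc l * a i = (l * a i * l⁻¹) * l := by group
    _ = a i * l := by rw [h2]
  constructor
  · constructor
    intro n hn g
    obtain ⟨a, ha, rfl⟩ := hn
    have h3 : a i₀ = g * a i₀ * g⁻¹ := by
      rw [hcentral a ha i₀ g]; group
    exact ⟨a, ha, h3⟩
  · intro a ha i
    obtain ⟨g, hg⟩ := MulAction.exists_smul_eq Γ i i₀
    refine ⟨fun j => a (g⁻¹ • j), hΓinv g a ha, ?_⟩
    show a (g⁻¹ • i₀) = a i
    rw [← hg, inv_smul_smul]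
end
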